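/- arXiv:2601.04532 — 2 statements merged into one kernel-verified Lean document; each statement's English description precedes it below -/
import Mathlib

section
/- For t, τ ∈ (−1,1), define ω₁(t,τ) = −(1/π) log | [ (τ(1 − √(1−t²)) − t(1 + √(1−τ²)))(τ + 1 − √(1−τ²)) ] / [ (τ(1 − √(1−t²)) − t(1 − √(1−τ²)))(τ + 1 + √(1−τ²)) ] |. Then ω₁ is square-integrable on (−1,1) × (−1,1) with respect to two-dimensional Lebesgue measure, i.e. ∫_{−1}^{1} ∫_{−1}^{1} ω₁(t,τ)² dt dτ < ∞. -/
open Set Real MeasureTheory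

/-- The logarithmic kernel `ω₁(t,τ)` arising from inverting the finite Hilbert transform. -/
noncomputable def omega1 (t τ : ℝ) : ℝ :=
  -(1 / π) * Real.log
    (|((τ * (1 - Real.sqrt (1 - t ^ 2)) - t * (1 + Real.sqrt (1 - τ ^ 2)))
          * (τ + 1 - Real.sqrt (1 - τ ^ 2)))
        / ((τ * (1 - Real.sqrt (1 - t ^ 2)) - t * (1 - Real.sqrt (1 - τ ^ 2)))
          * (τ + 1 + Real.sqrt (1 - τ ^ 2)))|)

lemma A_aux {t τ s u : ℝ} (ht0 : 0 < t) (ht1 : t < 1) (hτ1 : -1 < τ) (hτ2 : τ < 1)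
    (hs : s^2 = 1 - t^2) (hs0 : 0 ≤ s) (hu : u^2 = 1 - τ^2) (hu0 : 0 ≤ u) :
    t * s / 2 ≤ t * (1 + u) - τ * (1 - s) := by
  have hs1 : s ≤ 1 := by nlinarith
  have hu1 : u ≤ 1 := by nlinarith
  have key1 : 0 ≤ t * (τ*(1+s) - t)^2 := mul_nonneg ht0.le (sq_nonneg _)
  have inner : 0 ≤ (1+s)*(1+u)^2 - (1+s^2) := by
    nlinarith [mul_nonneg hs0 hu0, mul_nonneg hu0 hu0, mul_nonneg (mul_nonneg hs0 hu0) hu0]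
  have key2 : 0 ≤ t*(1+s) * ((1+s)*(1+u)^2 - (1+s^2)) :=
    mul_nonneg (mul_nonneg ht0.le (by linarith)) inner
  have hid : 2*(1+s)^2 * (t * (1 + u) - τ * (1 - s) - t * s / 2)
      = t * (τ*(1+s) - t)^2 + t*(1+s) * ((1+s)*(1+u)^2 - (1+s^2)) := by
    linear_combination (2*τ*(1+s) - t) * hs + (-(t*(1+s)^2)) * hu
  nlinarith [sq_nonneg (1+s)]

lemma absA {t τ s u : ℝ} (ht : t ∈ Ioo (-1:ℝ) 1) (hτ : τ ∈ Ioo (-1:ℝ) 1) (ht0 : t ≠ 0)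
    (hs : s^2 = 1 - t^2) (hs0 : 0 ≤ s) (hu : u^2 = 1 - τ^2) (hu0 : 0 ≤ u) :
    |t| * s / 2 ≤ |τ * (1 - s) - t * (1 + u)| := by
  obtain ⟨ht1, ht2⟩ := ht
  obtain ⟨hτ1, hτ2⟩ := hτ
  rcases ht0.lt_or_gt with h | h
  · -- t < 0 : apply A_aux to (-t, -τ)
    have := A_aux (t := -t) (τ := -τ) (by linarith) (by linarith) (by linarith) (by linarith)
      (by rw [neg_pow]; simpa using hs) hs0 (by rw [neg_pow]; simpa using hu) hu0
    have habs : |t| = -t := abs_of_neg h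
    calc |t| * s / 2 = (-t) * s / 2 := by rw [habs]
      _ ≤ τ * (1 - s) - t * (1 + u) := by nlinarith
      _ ≤ |τ * (1 - s) - t * (1 + u)| := le_abs_self _
  · have := A_aux (t := t) (τ := τ) h ht2 hτ1 hτ2 hs hs0 hu hu0
    have habs : |t| = t := abs_of_pos h
    calc |t| * s / 2 = t * s / 2 := by rw [habs]
      _ ≤ -(τ * (1 - s) - t * (1 + u)) := by nlinarith
      _ ≤ |τ * (1 - s) - t * (1 + u)| := neg_le_abs _

lemma M_nonneg {t τ s u : ℝ} (ht1 : -1 < t) (ht2 : t < 1) (hτ1 : -1 < τ) (hτ2 : τ < 1)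
    (htτ : τ < t) (hs : s^2 = 1 - t^2) (hs0 : 0 ≤ s) (hu : u^2 = 1 - τ^2) (hu0 : 0 ≤ u) :
    0 ≤ t * (1-s)*(1+u) - τ * (1-u)*(1+s) := by
  have hs1 : s ≤ 1 := by nlinarith
  have hu1 : u ≤ 1 := by nlinarith
  rcases le_or_gt τ 0 with hτ0 | hτ0
  · rcases le_or_gt 0 t with ht0 | ht0
    · have h1 : 0 ≤ t * (1-s)*(1+u) := mul_nonneg (mul_nonneg ht0 (by linarith)) (by linarith)
      have h2 : τ * (1-u)*(1+s) ≤ 0 := by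
        apply mul_nonpos_of_nonpos_of_nonneg _ (by linarith)
        exact mul_nonpos_of_nonpos_of_nonneg hτ0 (by linarith)
      linarith
    · -- τ < t < 0 : s ≥ u since t² < τ²
      have hsu : u ≤ s := by nlinarith
      have c1 : (-t) * ((1-s)*(1+u)) ≤ (-τ) * ((1-s)*(1+u)) := by
        apply mul_le_mul_of_nonneg_right (by linarith)
        exact mul_nonneg (by linarith) (by linarith)
      have c2 : (-τ) * ((1-s)*(1+u)) ≤ (-τ) * ((1-u)*(1+s)) := by
        apply mul_le_mul_of_nonneg_left _ (by linarith)
        nlinarith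
      nlinarith
  · -- 0 < τ < t : s ≤ u
    have hsu : s ≤ u := by nlinarith
    have c1 : τ * ((1-u)*(1+s)) ≤ t * ((1-u)*(1+s)) := by
      apply mul_le_mul_of_nonneg_right (by linarith)
      exact mul_nonneg (by linarith) (by linarith)
    have c2 : t * ((1-u)*(1+s)) ≤ t * ((1-s)*(1+u)) := by
      apply mul_le_mul_of_nonneg_left _ (by linarith)
      nlinarith
    nlinarith

lemma C_key {t τ s u : ℝ} (ht1 : -1 < t) (ht2 : t < 1) (hτ1 : -1 < τ) (hτ2 : τ < 1)
    (htτ : τ < t) (hs : s^2 = 1 - t^2) (hs0 : 0 ≤ s) (hu : u^2 = 1 - τ^2) (hu0 : 0 ≤ u) :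
    (1+s)*(1+u)*(t-τ)/2 ≤ t*(1+u) - τ*(1+s) := by
  have hM := M_nonneg ht1 ht2 hτ1 hτ2 htτ hs hs0 hu hu0
  nlinarith

lemma absC {t τ s u : ℝ} (ht : t ∈ Ioo (-1:ℝ) 1) (hτ : τ ∈ Ioo (-1:ℝ) 1)
    (htτ : τ < t) (hs : s^2 = 1 - t^2) (hs0 : 0 ≤ s) (hu : u^2 = 1 - τ^2) (hu0 : 0 ≤ u) :
    |t| * |τ| * (t - τ) / 2 ≤ |τ * (1 - s) - t * (1 - u)| := by
  obtain ⟨ht1, ht2⟩ := ht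
  obtain ⟨hτ1, hτ2⟩ := hτ
  have hkey := C_key ht1 ht2 hτ1 hτ2 htτ hs hs0 hu hu0
  have hfac : (τ*(1-s) - t*(1-u)) * ((1+s)*(1+u)) = t*τ*(t*(1+u) - τ*(1+s)) := by
    linear_combination (-(τ*(1+u))) * hs + (t*(1+s)) * hu
  have hsu_pos : 0 < (1+s)*(1+u) := by nlinarith
  have hpos : 0 ≤ t*(1+u) - τ*(1+s) := by
    refine le_trans ?_ hkey
    have h1 : 0 ≤ (1+s)*(1+u) := by nlinarith
    nlinarith
  have habs : |τ * (1 - s) - t * (1 - u)| * ((1+s)*(1+u)) = |t| * |τ| * (t*(1+u) - τ*(1+s)) := by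
    rw [← abs_of_pos hsu_pos, ← abs_mul, hfac, abs_mul, abs_mul, abs_of_nonneg hpos]
  have hstep : |t| * |τ| * ((1+s)*(1+u)*(t-τ)/2) ≤ |t| * |τ| * (t*(1+u) - τ*(1+s)) :=
    mul_le_mul_of_nonneg_left hkey (by positivity)
  rw [← habs] at hstep
  calc |t| * |τ| * (t - τ) / 2
      = (|t| * |τ| * ((1+s)*(1+u)*(t-τ)/2)) / ((1+s)*(1+u)) := by field_simp
    _ ≤ (|τ * (1 - s) - t * (1 - u)| * ((1+s)*(1+u))) / ((1+s)*(1+u)) := by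
        exact div_le_div_of_nonneg_right hstep hsu_pos.le
    _ = |τ * (1 - s) - t * (1 - u)| := by field_simp

lemma absC' {t τ s u : ℝ} (ht : t ∈ Ioo (-1:ℝ) 1) (hτ : τ ∈ Ioo (-1:ℝ) 1)
    (htτ : t ≠ τ) (hs : s^2 = 1 - t^2) (hs0 : 0 ≤ s) (hu : u^2 = 1 - τ^2) (hu0 : 0 ≤ u) :
    |t| * |τ| * |t - τ| / 2 ≤ |τ * (1 - s) - t * (1 - u)| := by
  rcases htτ.lt_or_gt with h | h
  · have := absC (t := τ) (τ := t) (s := u) (u := s) hτ ht h hu hu0 hs hs0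
    have h1 : |t - τ| = τ - t := by rw [abs_sub_comm]; exact abs_of_pos (by linarith)
    have h2 : |t * (1 - u) - τ * (1 - s)| = |τ * (1 - s) - t * (1 - u)| := abs_sub_comm _ _
    rw [h1]; rw [h2] at this; nlinarith [abs_nonneg t, abs_nonneg τ]
  · have := absC (t := t) (τ := τ) (s := s) (u := u) ht hτ h hs hs0 hu hu0
    have h1 : |t - τ| = t - τ := abs_of_pos (by linarith)
    rw [h1]; exact this

lemma absB {τ u : ℝ} (hτ1 : -1 < τ) (hτ2 : τ < 1) (hu : u^2 = 1 - τ^2) (hu0 : 0 ≤ u) :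
    2 * |τ| * (1 + τ) / 3 ≤ |τ + 1 - u| := by
  have hu1 : u ≤ 1 := by nlinarith
  have hD0 : 0 < τ + 1 + u := by linarith
  have hD3 : τ + 1 + u ≤ 3 := by linarith
  have hBD : (τ + 1 - u) * (τ + 1 + u) = 2 * τ * (1 + τ) := by linear_combination -hu
  have habs : |τ + 1 - u| * (τ + 1 + u) = 2 * |τ| * (1 + τ) := by
    rw [← abs_of_pos hD0, ← abs_mul, hBD, abs_mul, abs_mul, abs_of_pos (by linarith : (0:ℝ) < 1 + τ), abs_of_nonneg (by norm_num : (0:ℝ) ≤ 2)]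
  nlinarith [abs_nonneg (τ + 1 - u), abs_nonneg τ]

noncomputable def qpow (x : ℝ) : ℝ := |x| ^ (-(4:ℝ)⁻¹)

lemma qpow_nonneg (x : ℝ) : 0 ≤ qpow x := Real.rpow_nonneg (abs_nonneg x) _



/-- For `1 ≤ y`, `(log y)^2 ≤ 64 y^{1/4}`. -/
lemma sq_log_le_of_one_le {y : ℝ} (hy : 1 ≤ y) : (Real.log y)^2 ≤ 64 * y ^ ((4:ℝ)⁻¹) := by
  have h0 : 0 < y := lt_of_lt_of_le one_pos hy
  have h8 : (0:ℝ) < y ^ ((8:ℝ)⁻¹) := Real.rpow_pos_of_pos h0 _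
  have hlog : Real.log y = 8 * Real.log (y ^ ((8:ℝ)⁻¹)) := by
    rw [Real.log_rpow h0]; ring
  have hle : Real.log (y ^ ((8:ℝ)⁻¹)) ≤ y ^ ((8:ℝ)⁻¹) := by
    have := Real.log_le_sub_one_of_pos h8
    linarith
  have hlog_nonneg : 0 ≤ Real.log (y ^ ((8:ℝ)⁻¹)) := by
    apply Real.log_nonneg
    exact Real.one_le_rpow hy (by norm_num)
  have hsq : (y ^ ((8:ℝ)⁻¹))^2 = y ^ ((4:ℝ)⁻¹) := by
    rw [← Real.rpow_natCast (y ^ ((8:ℝ)⁻¹)) 2, ← Real.rpow_mul h0.le]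
    norm_num
  calc (Real.log y)^2 = 64 * (Real.log (y ^ ((8:ℝ)⁻¹)))^2 := by rw [hlog]; ring
    _ ≤ 64 * (y ^ ((8:ℝ)⁻¹))^2 := by nlinarith
    _ = 64 * y ^ ((4:ℝ)⁻¹) := by rw [hsq]

lemma sq_log_le {y : ℝ} (h0 : 0 < y) : (Real.log y)^2 ≤ 64 * (y ^ ((4:ℝ)⁻¹) + y ^ (-(4:ℝ)⁻¹)) := by
  rcases le_or_gt 1 y with h | h
  · have h1 : (0:ℝ) ≤ y ^ (-(4:ℝ)⁻¹) := Real.rpow_nonneg h0.le _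
    nlinarith [sq_log_le_of_one_le h]
  · have hinv : 1 ≤ y⁻¹ := one_le_inv_iff₀.mpr ⟨h0, h.le⟩
    have h2 := sq_log_le_of_one_le hinv
    rw [Real.log_inv] at h2
    have h3 : (y⁻¹) ^ ((4:ℝ)⁻¹) = y ^ (-(4:ℝ)⁻¹) := by
      rw [← Real.rpow_neg_one y, ← Real.rpow_mul h0.le]; norm_num
    rw [h3] at h2
    have h4 : (0:ℝ) ≤ y ^ ((4:ℝ)⁻¹) := Real.rpow_nonneg h0.le _
    nlinarith

/-- For `0 < y ≤ 2`, `(log y)^2 ≤ 128 + 64 * qpow y`. -/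
lemma sq_log_le' {y : ℝ} (h0 : 0 < y) (h2 : y ≤ 2) : (Real.log y)^2 ≤ 128 + 64 * qpow y := by
  have h := sq_log_le h0
  have hup : y ^ ((4:ℝ)⁻¹) ≤ 2 := by
    calc y ^ ((4:ℝ)⁻¹) ≤ 2 ^ ((4:ℝ)⁻¹) := Real.rpow_le_rpow h0.le h2 (by norm_num)
      _ ≤ 2 ^ (1:ℝ) := Real.rpow_le_rpow_of_exponent_le (by norm_num) (by norm_num)
      _ = 2 := by norm_num
  have hq : qpow y = y ^ (-(4:ℝ)⁻¹) := by rw [qpow, abs_of_pos h0]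
  rw [hq]; linarith

/-- If `0 < a ≤ b ≤ c` then `(log b)^2 ≤ (log a)^2 + (log c)^2`. -/
lemma sq_log_between {a b c : ℝ} (h0 : 0 < a) (h1 : a ≤ b) (h2 : b ≤ c) :
    (Real.log b)^2 ≤ (Real.log a)^2 + (Real.log c)^2 := by
  have l1 : Real.log a ≤ Real.log b := Real.log_le_log h0 h1
  have l2 : Real.log b ≤ Real.log c := Real.log_le_log (lt_of_lt_of_le h0 h1) h2
  rcases le_or_gt 0 (Real.log b) with h | h
  · nlinarith
  · nlinarith

lemma sum4_sq (a b c d : ℝ) : (a + b + c + d)^2 ≤ 4*(a^2+b^2+c^2+d^2) := by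
  nlinarith [sq_nonneg (a-b), sq_nonneg (a-c), sq_nonneg (a-d), sq_nonneg (b-c),
    sq_nonneg (b-d), sq_nonneg (c-d)]

lemma expand4A (a b c d : ℝ) : (a + (b + c)/2 - d)^2 ≤ 4*a^2 + b^2 + c^2 + 4*d^2 := by
  nlinarith [sum4_sq a (b/2) (c/2) (-d)]

lemma expand4B (a b c d : ℝ) : (a + b + c - d)^2 ≤ 4*a^2 + 4*b^2 + 4*c^2 + 4*d^2 := by
  nlinarith [sum4_sq a b c (-d)]

lemma expand4C (a b c d : ℝ) : (a + b - (c + d))^2 ≤ 4*(a^2+b^2+c^2+d^2) := by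
  nlinarith [sum4_sq a b (-c) (-d)]

lemma log2_sq : (Real.log 2)^2 ≤ 1 := by
  have h1 : 0 < Real.log 2 := Real.log_pos (by norm_num)
  have h2 : Real.log 2 ≤ 1 := by
    have := Real.log_le_sub_one_of_pos (by norm_num : (0:ℝ) < 2); linarith
  nlinarith

lemma log3_sq : (Real.log 3)^2 ≤ 4 := by
  have h1 : 0 < Real.log 3 := Real.log_pos (by norm_num)
  have h2 : Real.log 3 ≤ 2 := by
    have := Real.log_le_sub_one_of_pos (by norm_num : (0:ℝ) < 3); linarith
  nlinarith

lemma neg_inv_pi_mul_sq (L : ℝ) : (-(1 / Real.pi) * L)^2 ≤ L^2 := by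
  have hπ1 : 1 ≤ Real.pi := by linarith [Real.pi_gt_three]
  have h1 : (1/Real.pi)^2 ≤ 1 := by
    rw [div_pow, one_pow, div_le_one (by positivity)]
    nlinarith
  calc (-(1 / Real.pi) * L)^2 = (1/Real.pi)^2 * L^2 := by ring
    _ ≤ 1 * L^2 := mul_le_mul_of_nonneg_right h1 (sq_nonneg _)
    _ = L^2 := one_mul _

set_option maxHeartbeats 1000000 in
lemma omega1_core {t τ : ℝ} (ht : t ∈ Ioo (-1:ℝ) 1) (hτ : τ ∈ Ioo (-1:ℝ) 1)
    (ht0 : t ≠ 0) (hτ0 : τ ≠ 0) (htτ : t ≠ τ) :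
    omega1 t τ ^ 2 ≤ 100000 * (1 + qpow t + qpow τ + qpow (t-τ)
      + qpow (1-t) + qpow (1+t) + qpow (1+τ)) := by
  obtain ⟨ht1, ht2⟩ := ht
  obtain ⟨hτ1, hτ2⟩ := hτ
  rw [omega1]
  set s := Real.sqrt (1 - t ^ 2) with hs_def
  set u := Real.sqrt (1 - τ ^ 2) with hu_def
  set A := τ * (1 - s) - t * (1 + u) with hA_def
  set B := τ + 1 - u with hB_def
  set C := τ * (1 - s) - t * (1 - u) with hC_def
  set D := τ + 1 + u with hD_def
  -- basic facts
  have hs2 : s^2 = 1 - t^2 := Real.sq_sqrt (by nlinarith)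
  have hs0 : 0 ≤ s := Real.sqrt_nonneg _
  have hu2 : u^2 = 1 - τ^2 := Real.sq_sqrt (by nlinarith)
  have hu0 : 0 ≤ u := Real.sqrt_nonneg _
  have hs1 : s ≤ 1 := by nlinarith
  have hu1 : u ≤ 1 := by nlinarith
  have hspos : 0 < s := Real.sqrt_pos.mpr (by nlinarith)
  have hupos : 0 < u := Real.sqrt_pos.mpr (by nlinarith)
  have habs_t : |t| ≤ 1 := abs_le.mpr ⟨by linarith, by linarith⟩
  have habs_τ : |τ| ≤ 1 := abs_le.mpr ⟨by linarith, by linarith⟩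
  have htpos : 0 < |t| := abs_pos.mpr ht0
  have hτpos : 0 < |τ| := abs_pos.mpr hτ0
  have htτpos : 0 < |t - τ| := abs_pos.mpr (sub_ne_zero.mpr htτ)
  -- lower bounds
  have hAlb : |t| * s / 2 ≤ |A| := absA ⟨ht1, ht2⟩ ⟨hτ1, hτ2⟩ ht0 hs2 hs0 hu2 hu0
  have hBlb : 2 * |τ| * (1 + τ) / 3 ≤ |B| := absB hτ1 hτ2 hu2 hu0
  have hClb : |t| * |τ| * |t - τ| / 2 ≤ |C| := absC' ⟨ht1, ht2⟩ ⟨hτ1, hτ2⟩ htτ hs2 hs0 hu2 hu0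
  have hDlb : 1 + τ ≤ D := by rw [hD_def]; linarith
  -- upper bounds
  have triangle : ∀ a b : ℝ, |a - b| ≤ |a| + |b| := fun a b => abs_sub a b
  have hAub : |A| ≤ 3 := by
    have q1 : |τ * (1-s)| ≤ 1 := by
      rw [abs_mul, abs_of_nonneg (by linarith : (0:ℝ) ≤ 1 - s)]
      exact mul_le_one₀ habs_τ (by linarith) (by linarith)
    have q2 : |t * (1+u)| ≤ 2 := by
      rw [abs_mul, abs_of_nonneg (by linarith : (0:ℝ) ≤ 1 + u)]
      calc |t| * (1+u) ≤ 1 * (1+u) := mul_le_mul_of_nonneg_right habs_t (by linarith)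
        _ ≤ 2 := by linarith
    calc |A| ≤ |τ * (1-s)| + |t * (1+u)| := triangle _ _
      _ ≤ 3 := by linarith
  have hBub : |B| ≤ 3 := by
    rw [hB_def]; rw [abs_le]; constructor <;> [linarith; linarith]
  have hCub : |C| ≤ 3 := by
    have q1 : |τ * (1-s)| ≤ 1 := by
      rw [abs_mul, abs_of_nonneg (by linarith : (0:ℝ) ≤ 1 - s)]
      exact mul_le_one₀ habs_τ (by linarith) (by linarith)
    have q2 : |t * (1-u)| ≤ 1 := by
      rw [abs_mul, abs_of_nonneg (by linarith : (0:ℝ) ≤ 1 - u)]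
      exact mul_le_one₀ habs_t (by linarith) (by linarith)
    calc |C| ≤ |τ * (1-s)| + |t * (1-u)| := triangle _ _
      _ ≤ 3 := by linarith
  have hDub : D ≤ 3 := by rw [hD_def]; linarith
  have hDpos : 0 < D := lt_of_lt_of_le (by linarith) hDlb
  -- nonvanishing
  have hmApos : 0 < |t| * s / 2 := by positivity
  have hmBpos : 0 < 2 * |τ| * (1 + τ) / 3 := by
    have : (0:ℝ) < 1 + τ := by linarith
    positivity
  have hmCpos : 0 < |t| * |τ| * |t - τ| / 2 := by positivity
  have hA0 : A ≠ 0 := by intro h; rw [h, abs_zero] at hAlb; linarith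
  have hB0 : B ≠ 0 := by intro h; rw [h, abs_zero] at hBlb; linarith
  have hC0 : C ≠ 0 := by intro h; rw [h, abs_zero] at hClb; linarith
  have hD0 : D ≠ 0 := ne_of_gt hDpos
  -- split the log
  have hlog : Real.log |A * B / (C * D)|
      = Real.log |A| + Real.log |B| - (Real.log |C| + Real.log |D|) := by
    rw [Real.log_abs, Real.log_div (mul_ne_zero hA0 hB0) (mul_ne_zero hC0 hD0),
      Real.log_mul hA0 hB0, Real.log_mul hC0 hD0, Real.log_abs, Real.log_abs,
      Real.log_abs, Real.log_abs]
  -- between bounds for squared logs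
  have bA : (Real.log |A|)^2 ≤ (Real.log (|t| * s / 2))^2 + (Real.log 3)^2 :=
    sq_log_between hmApos hAlb hAub
  have bB : (Real.log |B|)^2 ≤ (Real.log (2 * |τ| * (1 + τ) / 3))^2 + (Real.log 3)^2 :=
    sq_log_between hmBpos hBlb hBub
  have bC : (Real.log |C|)^2 ≤ (Real.log (|t| * |τ| * |t - τ| / 2))^2 + (Real.log 3)^2 :=
    sq_log_between hmCpos hClb hCub
  have bD : (Real.log |D|)^2 ≤ (Real.log (1 + τ))^2 + (Real.log 3)^2 := by
    refine sq_log_between (by linarith) ?_ ?_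
    · rw [abs_of_pos hDpos]; exact hDlb
    · rw [abs_of_pos hDpos]; exact hDub
  -- expansions of the logs of the lower bounds
  have hlogs : Real.log s = (Real.log (1-t) + Real.log (1+t))/2 := by
    rw [hs_def, show (1:ℝ) - t^2 = (1-t)*(1+t) by ring,
      Real.log_sqrt (mul_nonneg (by linarith : (0:ℝ) ≤ 1-t) (by linarith : (0:ℝ) ≤ 1+t)),
      Real.log_mul (by linarith : (0:ℝ) < 1-t).ne' (by linarith : (0:ℝ) < 1+t).ne']
  have eA : Real.log (|t| * s / 2)
      = Real.log |t| + (Real.log (1-t) + Real.log (1+t))/2 - Real.log 2 := by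
    rw [Real.log_div (by positivity) two_ne_zero, Real.log_mul htpos.ne' hspos.ne', hlogs]
  have eB : Real.log (2 * |τ| * (1 + τ) / 3)
      = Real.log 2 + Real.log |τ| + Real.log (1+τ) - Real.log 3 := by
    rw [Real.log_div (mul_ne_zero (mul_ne_zero two_ne_zero hτpos.ne')
        (by linarith : (0:ℝ) < 1+τ).ne') (by norm_num : (3:ℝ) ≠ 0),
      Real.log_mul (by positivity) (by linarith : (0:ℝ) < 1+τ).ne',
      Real.log_mul two_ne_zero hτpos.ne']
  have eC : Real.log (|t| * |τ| * |t - τ| / 2)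
      = Real.log |t| + Real.log |τ| + Real.log |t-τ| - Real.log 2 := by
    rw [Real.log_div (by positivity) two_ne_zero,
      Real.log_mul (by positivity) htτpos.ne', Real.log_mul htpos.ne' hτpos.ne']
  -- atomic square-log bounds
  have hqabs : ∀ x : ℝ, qpow |x| = qpow x := fun x => by rw [qpow, qpow, abs_abs]
  have qt : (Real.log |t|)^2 ≤ 128 + 64 * qpow t := by
    have := sq_log_le' htpos (le_trans habs_t one_le_two)
    rwa [hqabs t] at this
  have qτ : (Real.log |τ|)^2 ≤ 128 + 64 * qpow τ := by
    have := sq_log_le' hτpos (le_trans habs_τ one_le_two)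
    rwa [hqabs τ] at this
  have qtτ : (Real.log |t - τ|)^2 ≤ 128 + 64 * qpow (t - τ) := by
    have hle : |t - τ| ≤ 2 := (abs_sub t τ).trans (by linarith)
    have := sq_log_le' htτpos hle
    rwa [hqabs (t - τ)] at this
  have q1mt : (Real.log (1-t))^2 ≤ 128 + 64 * qpow (1-t) := by
    have h0 : (0:ℝ) < 1 - t := by linarith
    exact sq_log_le' h0 (by linarith)
  have q1pt : (Real.log (1+t))^2 ≤ 128 + 64 * qpow (1+t) := by
    have h0 : (0:ℝ) < 1 + t := by linarith
    exact sq_log_le' h0 (by linarith)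
  have q1pτ : (Real.log (1+τ))^2 ≤ 128 + 64 * qpow (1+τ) := by
    have h0 : (0:ℝ) < 1 + τ := by linarith
    exact sq_log_le' h0 (by linarith)
  -- constants
  have hl2 : (Real.log 2)^2 ≤ 1 := log2_sq
  have hl3 : (Real.log 3)^2 ≤ 4 := log3_sq
  -- expanded square bounds
  have sA : (Real.log (|t| * s / 2))^2
      ≤ 4*(Real.log |t|)^2 + (Real.log (1-t))^2 + (Real.log (1+t))^2 + 4*(Real.log 2)^2 := by
    rw [eA]; exact expand4A _ _ _ _
  have sB : (Real.log (2 * |τ| * (1 + τ) / 3))^2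
      ≤ 4*(Real.log 2)^2 + 4*(Real.log |τ|)^2 + 4*(Real.log (1+τ))^2 + 4*(Real.log 3)^2 := by
    rw [eB]; exact expand4B _ _ _ _
  have sC : (Real.log (|t| * |τ| * |t - τ| / 2))^2
      ≤ 4*(Real.log |t|)^2 + 4*(Real.log |τ|)^2 + 4*(Real.log |t-τ|)^2 + 4*(Real.log 2)^2 := by
    rw [eC]; exact expand4B _ _ _ _
  -- assemble
  have hsum : (Real.log |A * B / (C * D)|)^2
      ≤ 4*((Real.log |A|)^2 + (Real.log |B|)^2 + (Real.log |C|)^2 + (Real.log |D|)^2) := by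
    rw [hlog]; exact expand4C _ _ _ _
  have hπsq : (-(1 / π) * Real.log |A * B / (C * D)|)^2 ≤ (Real.log |A * B / (C * D)|)^2 :=
    neg_inv_pi_mul_sq _
  have n1 := qpow_nonneg t
  have n2 := qpow_nonneg τ
  have n3 := qpow_nonneg (t - τ)
  have n4 := qpow_nonneg (1 - t)
  have n5 := qpow_nonneg (1 + t)
  have n6 := qpow_nonneg (1 + τ)
  linarith

lemma measurable_omega1_sq : Measurable (fun p : ℝ × ℝ => omega1 p.1 p.2 ^ 2) := by
  unfold omega1
  apply Measurable.pow_const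
  apply Measurable.const_mul
  apply Measurable.log
  fun_prop

lemma vol_fst_zero : (volume : Measure (ℝ × ℝ)) {p : ℝ × ℝ | p.1 = 0} = 0 := by
  have he : {p : ℝ × ℝ | p.1 = 0} = ({0} : Set ℝ) ×ˢ (univ : Set ℝ) := by
    ext p
    constructor
    · intro h; exact ⟨h, mem_univ _⟩
    · intro h; exact h.1
  rw [Measure.volume_eq_prod, he, Measure.prod_prod]
  simp

lemma vol_snd_zero : (volume : Measure (ℝ × ℝ)) {p : ℝ × ℝ | p.2 = 0} = 0 := by
  have he : {p : ℝ × ℝ | p.2 = 0} = (univ : Set ℝ) ×ˢ ({0} : Set ℝ) := by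
    ext p
    constructor
    · intro h; exact ⟨mem_univ _, h⟩
    · intro h; exact h.2
  rw [Measure.volume_eq_prod, he, Measure.prod_prod]
  simp

lemma vol_diag_zero : (volume : Measure (ℝ × ℝ)) {p : ℝ × ℝ | p.1 = p.2} = 0 := by
  have hms : MeasurableSet {p : ℝ × ℝ | p.1 = p.2} :=
    measurableSet_eq_fun measurable_fst measurable_snd
  rw [Measure.volume_eq_prod]
  rw [Measure.measure_prod_null hms]
  refine Filter.Eventually.of_forall (fun x => ?_)
  have : (Prod.mk x ⁻¹' {p : ℝ × ℝ | p.1 = p.2}) = {x} := by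
    ext y; simp [eq_comm]
  show volume (Prod.mk x ⁻¹' {p : ℝ × ℝ | p.1 = p.2}) = 0
  rw [this]
  exact measure_singleton x


lemma intervalIntegrable_qpow (a b : ℝ) : IntervalIntegrable qpow volume a b := by
  suffices h : ∀ c : ℝ, IntervalIntegrable qpow volume 0 c by
    exact (h a).symm.trans (h b)
  have hpos : ∀ c : ℝ, 0 ≤ c → IntervalIntegrable qpow volume 0 c := by
    intro c hc
    have base : IntervalIntegrable (fun x : ℝ => x ^ (-(4:ℝ)⁻¹)) volume 0 c :=
      intervalIntegral.intervalIntegrable_rpow' (by norm_num)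
    rw [intervalIntegrable_iff_integrableOn_Ioc_of_le hc] at base ⊢
    refine base.congr_fun ?_ measurableSet_Ioc
    intro x hx
    rw [qpow, abs_of_pos hx.1]
  intro c
  rcases le_or_gt 0 c with hc | hc
  · exact hpos c hc
  · have h := (IntervalIntegrable.iff_comp_neg).mp (hpos (-c) (by linarith))
    unfold qpow
    simpa [qpow, abs_neg] using h

lemma integrableOn_qpow_shift (c : ℝ) :
    IntegrableOn (fun x => qpow (x - c)) (Ioo (-1:ℝ) 1) volume := by
  have h := (intervalIntegrable_qpow (-1 - c) (1 - c)).comp_sub_right c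
  have e1 : -1 - c + c = (-1:ℝ) := by ring
  have e2 : 1 - c + c = (1:ℝ) := by ring
  rw [e1, e2, intervalIntegrable_iff_integrableOn_Ioc_of_le (by norm_num)] at h
  exact h.mono_set Ioo_subset_Ioc_self

lemma integrableOn_one_Ioo : IntegrableOn (fun _ : ℝ => (1:ℝ)) (Ioo (-1:ℝ) 1) volume := by
  refine (integrableOn_const_iff).mpr (Or.inr ?_)
  rw [Real.volume_Ioo]
  exact ENNReal.ofReal_lt_top

lemma int2d_left {f : ℝ → ℝ} (hf : IntegrableOn f (Ioo (-1:ℝ) 1) volume) :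
    IntegrableOn (fun p : ℝ × ℝ => f p.1) (Ioo (-1:ℝ) 1 ×ˢ Ioo (-1:ℝ) 1) volume := by
  have h : Integrable (fun z : ℝ × ℝ => f z.1 * (1:ℝ))
      ((volume.restrict (Ioo (-1:ℝ) 1)).prod (volume.restrict (Ioo (-1:ℝ) 1))) :=
    Integrable.mul_prod hf integrableOn_one_Ioo
  rw [Measure.prod_restrict] at h
  rw [IntegrableOn, Measure.volume_eq_prod]
  simpa using h

lemma int2d_right {f : ℝ → ℝ} (hf : IntegrableOn f (Ioo (-1:ℝ) 1) volume) :
    IntegrableOn (fun p : ℝ × ℝ => f p.2) (Ioo (-1:ℝ) 1 ×ˢ Ioo (-1:ℝ) 1) volume := by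
  have h : Integrable (fun z : ℝ × ℝ => (1:ℝ) * f z.2)
      ((volume.restrict (Ioo (-1:ℝ) 1)).prod (volume.restrict (Ioo (-1:ℝ) 1))) :=
    Integrable.mul_prod integrableOn_one_Ioo hf
  rw [Measure.prod_restrict] at h
  rw [IntegrableOn, Measure.volume_eq_prod]
  simpa using h


lemma int2d_diag :
    IntegrableOn (fun p : ℝ × ℝ => qpow (p.1 - p.2)) (Ioo (-1:ℝ) 1 ×ˢ Ioo (-1:ℝ) 1) volume := by
  have hq2 : IntegrableOn qpow (Ioo (-2:ℝ) 2) volume := by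
    have h := intervalIntegrable_qpow (-2) 2
    rw [intervalIntegrable_iff_integrableOn_Ioc_of_le (by norm_num)] at h
    exact h.mono_set Ioo_subset_Ioc_self
  have hind1 : Integrable ((Ioo (-2:ℝ) 2).indicator qpow) volume :=
    hq2.integrable_indicator measurableSet_Ioo
  have hind2 : Integrable ((Ioo (-1:ℝ) 1).indicator (fun _ => (1:ℝ))) volume :=
    integrableOn_one_Ioo.integrable_indicator measurableSet_Ioo
  have H : Integrable (fun z : ℝ × ℝ =>
      (Ioo (-2:ℝ) 2).indicator qpow z.1 * (Ioo (-1:ℝ) 1).indicator (fun _ => (1:ℝ)) z.2)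
      ((volume : Measure ℝ).prod volume) := Integrable.mul_prod hind1 hind2
  have MP : MeasurePreserving (fun z : ℝ × ℝ => (z.1 - z.2, z.2))
      ((volume : Measure ℝ).prod volume) ((volume : Measure ℝ).prod volume) :=
    measurePreserving_sub_prod volume volume
  have H2 : Integrable ((fun z : ℝ × ℝ =>
      (Ioo (-2:ℝ) 2).indicator qpow z.1 * (Ioo (-1:ℝ) 1).indicator (fun _ => (1:ℝ)) z.2)
      ∘ (fun z : ℝ × ℝ => (z.1 - z.2, z.2))) ((volume : Measure ℝ).prod volume) :=
    (MP.integrable_comp H.aestronglyMeasurable).mpr H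
  rw [IntegrableOn, Measure.volume_eq_prod]
  refine (H2.integrableOn (s := Ioo (-1:ℝ) 1 ×ˢ Ioo (-1:ℝ) 1)).congr_fun ?_
    (measurableSet_Ioo.prod measurableSet_Ioo)
  intro p hp
  obtain ⟨hp1, hp2⟩ := hp
  have h1 : p.1 - p.2 ∈ Ioo (-2:ℝ) 2 := by
    obtain ⟨a1, a2⟩ := hp1; obtain ⟨b1, b2⟩ := hp2
    constructor <;> linarith
  simp only [Function.comp_apply, indicator_of_mem h1, indicator_of_mem hp2, mul_one]

lemma integrable_majorant :
    IntegrableOn (fun p : ℝ × ℝ => 100000 * (1 + qpow p.1 + qpow p.2 + qpow (p.1 - p.2)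
      + qpow (1 - p.1) + qpow (1 + p.1) + qpow (1 + p.2)))
      (Ioo (-1:ℝ) 1 ×ˢ Ioo (-1:ℝ) 1) volume := by
  have hqpow : IntegrableOn (fun x : ℝ => qpow x) (Ioo (-1:ℝ) 1) volume := by
    have := integrableOn_qpow_shift 0
    simpa using this
  have h1m : IntegrableOn (fun x : ℝ => qpow (1 - x)) (Ioo (-1:ℝ) 1) volume := by
    have h := integrableOn_qpow_shift 1
    refine h.congr_fun (fun x _ => ?_) measurableSet_Ioo
    show qpow (x - 1) = qpow (1 - x)
    rw [qpow, qpow, abs_sub_comm]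
  have h1p : IntegrableOn (fun x : ℝ => qpow (1 + x)) (Ioo (-1:ℝ) 1) volume := by
    have h := integrableOn_qpow_shift (-1)
    refine h.congr_fun (fun x _ => ?_) measurableSet_Ioo
    show qpow (x - -1) = qpow (1 + x)
    rw [sub_neg_eq_add, add_comm]
  have hconst : IntegrableOn (fun _ : ℝ × ℝ => (1:ℝ)) (Ioo (-1:ℝ) 1 ×ˢ Ioo (-1:ℝ) 1) volume := by
    refine (integrableOn_const_iff).mpr (Or.inr ?_)
    rw [Measure.volume_eq_prod, Measure.prod_prod, Real.volume_Ioo]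
    exact ENNReal.mul_lt_top ENNReal.ofReal_lt_top ENNReal.ofReal_lt_top
  have hsum := ((((((hconst.add (int2d_left hqpow)).add (int2d_right hqpow)).add
      int2d_diag).add (int2d_left h1m)).add (int2d_left h1p)).add (int2d_right h1p))
  exact hsum.const_mul 100000

/-- **`ω₁` is a Hilbert–Schmidt kernel:** `ω₁` is square-integrable on
`(-1,1) × (-1,1)` with respect to two-dimensional Lebesgue measure. -/
theorem omega1_memL2 :
    IntegrableOn (fun p : ℝ × ℝ => (omega1 p.1 p.2) ^ 2)
      (Ioo (-1 : ℝ) 1 ×ˢ Ioo (-1 : ℝ) 1) (volume : Measure (ℝ × ℝ)) := by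
  have hQmeas : MeasurableSet (Ioo (-1:ℝ) 1 ×ˢ Ioo (-1:ℝ) 1) :=
    measurableSet_Ioo.prod measurableSet_Ioo
  refine Integrable.mono' integrable_majorant
    measurable_omega1_sq.aestronglyMeasurable ?_
  have e1 : ∀ᵐ p : ℝ × ℝ ∂(volume : Measure (ℝ × ℝ)), ¬ (p.1 = 0) :=
    measure_eq_zero_iff_ae_notMem.mp vol_fst_zero
  have e2 : ∀ᵐ p : ℝ × ℝ ∂(volume : Measure (ℝ × ℝ)), ¬ (p.2 = 0) :=
    measure_eq_zero_iff_ae_notMem.mp vol_snd_zero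
  have e3 : ∀ᵐ p : ℝ × ℝ ∂(volume : Measure (ℝ × ℝ)), ¬ (p.1 = p.2) :=
    measure_eq_zero_iff_ae_notMem.mp vol_diag_zero
  filter_upwards [ae_restrict_of_ae (e1.and (e2.and e3)), ae_restrict_mem hQmeas]
    with p hp hpQ
  obtain ⟨h1, h2, h3⟩ := hp
  have hb := omega1_core hpQ.1 hpQ.2 h1 h2 h3
  rw [Real.norm_eq_abs, abs_of_nonneg (sq_nonneg _)]
  exact hb
end

section
/- For every x ∈ (−1,1), the principal value integral PV ∫_{−1}^{1} dt / ( √(1−t²) (t − x) ), defined as the limit as ε → 0⁺ of ∫_{[−1,1] \ (x−ε, x+ε)} dt / ( √(1−t²)(t − x) ), exists and equals 0. -/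
open Set Real MeasureTheory Filter Topology

/-- **The Chebyshev weight annihilates the Cauchy kernel:** for every `x ∈ (-1,1)`, the
principal value `PV ∫_{-1}^{1} dt / (√(1-t²)(t-x))`, defined as the limit as `ε → 0⁺` of
the integral over `[-1,1] \ (x-ε, x+ε)`, exists and equals `0`. -/
theorem pv_integral_chebyshev_weight_cauchy_kernel_eq_zero
    (x : ℝ) (hx : x ∈ Ioo (-1 : ℝ) 1) :
    Tendsto
      (fun ε : ℝ => ∫ t in Icc (-1 : ℝ) 1 \ Ioo (x - ε) (x + ε),
        1 / (Real.sqrt (1 - t ^ 2) * (t - x)))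
      (𝓝[>] 0) (𝓝 0) := by
  obtain ⟨hx1, hx2⟩ := hx
  set r : ℝ := Real.sqrt (1 - x ^ 2) with hr
  have hr2 : r ^ 2 = 1 - x ^ 2 := Real.sq_sqrt (by nlinarith)
  have hrpos : 0 < r := Real.sqrt_pos.2 (by nlinarith)
  set D : ℝ → ℝ := fun t => 1 - x * t + r * Real.sqrt (1 - t ^ 2) with hD
  set F : ℝ → ℝ := fun t => (Real.log (t - x) - Real.log (D t)) / r with hF
  set f : ℝ → ℝ := fun t => 1 / (Real.sqrt (1 - t ^ 2) * (t - x)) with hf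
  have hDcont : Continuous D := by
    apply Continuous.add
    · fun_prop
    · exact continuous_const.mul (Real.continuous_sqrt.comp (by fun_prop))
  have hDpos : ∀ t ∈ Icc (-1:ℝ) 1, 0 < D t := by
    intro t ht
    have h1 : 0 ≤ Real.sqrt (1 - t ^ 2) := Real.sqrt_nonneg _
    have h2 : 0 ≤ (1 - x) * (1 + t) := by nlinarith [ht.1, ht.2]
    have h3 : 0 ≤ (1 + x) * (1 - t) := by nlinarith [ht.1, ht.2]
    have h5 : 0 ≤ r * Real.sqrt (1 - t ^ 2) := by positivity
    simp only [hD]; nlinarith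
  -- the weight is integrable
  have hw : IntegrableOn (fun t : ℝ => 1 / Real.sqrt (1 - t ^ 2)) (Icc (-1:ℝ) 1) := by
    rw [integrableOn_Icc_iff_integrableOn_Ioc]
    apply intervalIntegral.integrableOn_deriv_of_nonneg
      (Real.continuous_arcsin.continuousOn)
    · intro t ht
      exact Real.hasDerivAt_arcsin (ne_of_gt ht.1) (ne_of_lt ht.2)
    · intro t ht; positivity
  have hfmeas : Measurable f := by
    apply Measurable.div measurable_const
    exact ((Real.continuous_sqrt.comp (by fun_prop)).measurable).mul (by fun_prop)
  -- integrability of f on subintervals away from x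
  have hfIcc : ∀ a b : ℝ, -1 ≤ a → b ≤ 1 → ∀ ε : ℝ, 0 < ε →
      (∀ t ∈ Icc a b, ε ≤ |t - x|) → IntegrableOn f (Icc a b) := by
    intro a b ha hb ε hε hbd
    have hwab : IntegrableOn (fun t : ℝ => (1/ε) * (1 / Real.sqrt (1 - t ^ 2))) (Icc a b) :=
      (hw.mono_set (Icc_subset_Icc ha hb)).const_mul _
    apply hwab.integrable.mono hfmeas.aestronglyMeasurable
    rw [ae_restrict_iff' measurableSet_Icc]
    filter_upwards with t ht
    have hs0 : 0 ≤ Real.sqrt (1 - t ^ 2) := Real.sqrt_nonneg _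
    rcases eq_or_lt_of_le hs0 with h | h
    · simp [hf, ← h]
    · have hbt := hbd t ht
      have htx : t - x ≠ 0 := by
        intro h0; rw [h0, abs_zero] at hbt; linarith
      rw [Real.norm_eq_abs, Real.norm_eq_abs, hf]
      rw [abs_div, abs_mul, abs_one, abs_mul, abs_div, abs_one, abs_of_pos h,
        abs_of_pos hε, abs_of_pos (one_div_pos.2 h), one_div_mul_one_div]
      exact one_div_le_one_div_of_le (by positivity)
        (by nlinarith [mul_le_mul_of_nonneg_left hbt hs0])
  -- derivative of F
  have hderivF : ∀ t ∈ Ioo (-1:ℝ) 1, t - x ≠ 0 → HasDerivAt F (f t) t := by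
    intro t ht htx
    have h1t : 0 < 1 - t ^ 2 := by nlinarith [ht.1, ht.2]
    have hs2 : Real.sqrt (1 - t ^ 2) ^ 2 = 1 - t ^ 2 := Real.sq_sqrt h1t.le
    have hspos : 0 < Real.sqrt (1 - t ^ 2) := Real.sqrt_pos.2 h1t
    have hDt : 0 < D t := hDpos t (Ioo_subset_Icc_self ht)
    have h1 : HasDerivAt (fun u : ℝ => 1 - u ^ 2) (-(2 * t)) t := by
      simpa using ((hasDerivAt_pow 2 t).const_sub 1)
    have h2 : HasDerivAt (fun u : ℝ => Real.sqrt (1 - u ^ 2))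
        (-t / Real.sqrt (1 - t ^ 2)) t := by
      have := (Real.hasDerivAt_sqrt h1t.ne').comp t h1
      refine this.congr_deriv (Eq.symm ?_)
      field_simp
    have h3 : HasDerivAt D (-x + r * (-t / Real.sqrt (1 - t ^ 2))) t := by
      have ha : HasDerivAt (fun u : ℝ => 1 - x * u) (-x) t := by
        simpa using (((hasDerivAt_id t).const_mul x).const_sub 1)
      exact ha.add (h2.const_mul r)
    have h4 : HasDerivAt (fun u : ℝ => Real.log (u - x)) (1 / (t - x)) t := by
      have := (Real.hasDerivAt_log htx).comp t ((hasDerivAt_id t).sub_const x)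
      exact this.congr_deriv (by simp)
    have h5 : HasDerivAt (fun u : ℝ => Real.log (D u))
        ((-x + r * (-t / Real.sqrt (1 - t ^ 2))) / D t) t := by
      have := (Real.hasDerivAt_log hDt.ne').comp t h3
      refine this.congr_deriv (Eq.symm ?_)
      ring
    have h6 := (h4.sub h5).div_const r
    refine h6.congr_deriv (Eq.symm ?_)
    have hkey : Real.sqrt (1 - t ^ 2) * D t
        + (x * Real.sqrt (1 - t ^ 2) + r * t) * (t - x) = r * D t := by
      simp only [hD]
      linear_combination (-(Real.sqrt (1 - t ^ 2))) * hr2 + r * hs2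
    rw [hf]
    field_simp
    linear_combination (-1 : ℝ) * hkey
  -- continuity of F
  have hFcont : ∀ a b : ℝ, -1 ≤ a → b ≤ 1 → (∀ t ∈ Icc a b, t - x ≠ 0) →
      ContinuousOn F (Icc a b) := by
    intro a b ha hb hne
    apply ContinuousOn.div_const
    apply ContinuousOn.sub
    · exact ContinuousOn.log (by fun_prop) hne
    · exact ContinuousOn.log hDcont.continuousOn
        (fun t ht => (hDpos t (Icc_subset_Icc ha hb ht)).ne')
  -- FTC on a piece
  have hpiece : ∀ a b : ℝ, -1 ≤ a → a ≤ b → b ≤ 1 → ∀ ε : ℝ, 0 < ε →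
      (∀ t ∈ Icc a b, ε ≤ |t - x|) → ∫ t in Icc a b, f t = F b - F a := by
    intro a b ha hab hb ε hε hbd
    have hne : ∀ t ∈ Icc a b, t - x ≠ 0 := by
      intro t ht h0
      have := hbd t ht
      rw [h0, abs_zero] at this; linarith
    rw [MeasureTheory.integral_Icc_eq_integral_Ioc, ← intervalIntegral.integral_of_le hab]
    apply intervalIntegral.integral_eq_sub_of_hasDeriv_right_of_le hab
      (hFcont a b ha hb hne)
    · intro t ht
      exact (hderivF t ⟨lt_of_le_of_lt ha ht.1, lt_of_lt_of_le ht.2 hb⟩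
        (hne t (Ioo_subset_Icc_self ht))).hasDerivWithinAt
    · rw [intervalIntegrable_iff_integrableOn_Icc_of_le hab]
      exact hfIcc a b ha hb ε hε hbd
  -- the explicit value for small ε
  have key : ∀ ε : ℝ, ε ∈ Ioo 0 (min (x + 1) (1 - x)) →
      (∫ t in Icc (-1:ℝ) 1 \ Ioo (x - ε) (x + ε), f t)
        = (Real.log (D (x + ε)) - Real.log (D (x - ε))) / r := by
    rintro ε ⟨hε0, hεδ⟩
    have hε1 : ε < x + 1 := lt_of_lt_of_le hεδ (min_le_left _ _)
    have hε2 : ε < 1 - x := lt_of_lt_of_le hεδ (min_le_right _ _)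
    have hsplit : Icc (-1:ℝ) 1 \ Ioo (x - ε) (x + ε)
        = Icc (-1) (x - ε) ∪ Icc (x + ε) 1 := by
      ext t
      simp only [mem_diff, mem_Icc, mem_Ioo, mem_union, not_and, not_lt]
      constructor
      · rintro ⟨⟨h1, h2⟩, h3⟩
        rcases le_or_gt t (x - ε) with h | h
        · exact Or.inl ⟨h1, h⟩
        · exact Or.inr ⟨h3 h, h2⟩
      · rintro (⟨h1, h2⟩ | ⟨h1, h2⟩)
        · exact ⟨⟨h1, by linarith⟩, fun h => by linarith⟩
        · exact ⟨⟨by linarith, h2⟩, fun h => by linarith⟩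
    have hb1 : ∀ t ∈ Icc (-1:ℝ) (x - ε), ε ≤ |t - x| := by
      intro t ht
      rw [abs_sub_comm, abs_of_nonneg (by linarith [ht.2])]
      linarith [ht.2]
    have hb2 : ∀ t ∈ Icc (x + ε) (1:ℝ), ε ≤ |t - x| := by
      intro t ht
      rw [abs_of_nonneg (by linarith [ht.1])]
      linarith [ht.1]
    have hdisj : Disjoint (Icc (-1:ℝ) (x - ε)) (Icc (x + ε) 1) := by
      apply Set.disjoint_left.2
      intro t ht1 ht2
      have := ht1.2; have := ht2.1; linarith
    rw [hsplit, MeasureTheory.setIntegral_union hdisj measurableSet_Icc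
      (hfIcc _ _ le_rfl (by linarith) ε hε0 hb1)
      (hfIcc _ _ (by linarith) le_rfl ε hε0 hb2),
      hpiece (-1) (x - ε) le_rfl (by linarith) (by linarith) ε hε0 hb1,
      hpiece (x + ε) 1 (by linarith) (by linarith) le_rfl ε hε0 hb2]
    have hFm1 : F (-1) = 0 := by
      have e1 : (-1:ℝ) - x = -(1 + x) := by ring
      have e2 : D (-1) = 1 + x := by
        simp only [hD]
        norm_num
      simp only [hF, e1, e2, Real.log_neg_eq_log, sub_self, zero_div]
    have hF1 : F 1 = 0 := by
      have e2 : D 1 = 1 - x := by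
        simp only [hD]
        norm_num
      simp only [hF, e2, sub_self, zero_div]
    have hFl : F (x - ε) = (Real.log ε - Real.log (D (x - ε))) / r := by
      simp only [hF]
      rw [show x - ε - x = -ε by ring, Real.log_neg_eq_log]
    have hFr : F (x + ε) = (Real.log ε - Real.log (D (x + ε))) / r := by
      simp only [hF]
      rw [show x + ε - x = ε by ring]
    rw [hFm1, hF1, hFl, hFr]
    ring
  -- the limit of the explicit value
  have hδ : 0 < min (x + 1) (1 - x) := lt_min (by linarith) (by linarith)
  have hlim : Tendsto (fun ε : ℝ => (Real.log (D (x + ε)) - Real.log (D (x - ε))) / r)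
      (𝓝[>] 0) (𝓝 0) := by
    have hDx : D x ≠ 0 := (hDpos x ⟨by linarith, by linarith⟩).ne'
    have g1 : ContinuousAt (fun ε : ℝ => x + ε) 0 := by fun_prop
    have g1' : ContinuousAt (fun ε : ℝ => x - ε) 0 := by fun_prop
    have c1 : ContinuousAt (fun ε : ℝ => Real.log (D (x + ε))) 0 :=
      ContinuousAt.comp (Real.continuousAt_log (by simpa using hDx))
        (ContinuousAt.comp hDcont.continuousAt g1)
    have c2 : ContinuousAt (fun ε : ℝ => Real.log (D (x - ε))) 0 :=
      ContinuousAt.comp (Real.continuousAt_log (by simpa using hDx))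
        (ContinuousAt.comp hDcont.continuousAt g1')
    have := ((c1.sub c2).div_const r).tendsto
    simp only [Pi.sub_apply, add_zero, sub_zero, sub_self, zero_div] at this
    exact this.mono_left nhdsWithin_le_nhds
  refine hlim.congr' ?_
  filter_upwards [Ioo_mem_nhdsGT_of_mem (⟨le_refl 0, hδ⟩ : (0:ℝ) ∈ Ico 0 (min (x + 1) (1 - x)))]
    with ε hε
  exact (key ε hε).symm
end
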